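/- Feasibility constraint for diagonal off-blocks (from the proof of Theorem 4.3): let Δ = !![0, 1; -1, 0] and J = (Complex.I / 2) • Matrix.fromBlocks Δ 0 0 (−Δ) as a complex 4×4 matrix. For real numbers ν, ν', c with 1/2 ≤ ν ≤ ν', the two matrices (Matrix.fromBlocks (ν' • 1) (c • 1) (c • 1) (ν • 1), coerced to a complex 4×4 matrix) + J and the same matrix − J are both positive semidefinite if and only if c² ≤ (ν − 1/2) * (ν' + 1/2). -/

import Mathlib

open Matrix
open scoped ComplexOrder

noncomputable section

/-- The single-mode symplectic form `Δ = !![0, 1; -1, 0]`. -/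
def Δsymp : Matrix (Fin 2) (Fin 2) ℝ := !![0, 1; -1, 0]

/-- The matrix `J = (i/2) • fromBlocks Δ 0 0 (−Δ)` appearing in the uncertainty
relation for couplings of single-mode states. -/
def Jmat : Matrix (Fin 2 ⊕ Fin 2) (Fin 2 ⊕ Fin 2) ℂ :=
  (Complex.I / 2) • (Matrix.fromBlocks Δsymp 0 0 (-Δsymp)).map Complex.ofReal

/-!
Write `M` for the real block matrix. The coordinates `x₁ ± i x₂` of each mode diagonalise `Δ`, and
in them the Hermitian form of `M + s • J` splits into the forms of the real symmetric matrices
`!![ν' + s/2, c; c, ν - s/2]` and `!![ν' - s/2, c; c, ν + s/2]`. Hence `M ± J` are both positive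
semidefinite iff `c² ≤ (ν' + 1/2)(ν - 1/2)` and `c² ≤ (ν' - 1/2)(ν + 1/2)`; the second bound
exceeds the first by `ν' - ν ≥ 0`.
-/

open ComplexConjugate

/-- `star v ⬝ᵥ !![p, c; c, q] *ᵥ v` for `v = ![u, w]`. -/
def blockForm (p q c : ℝ) (u w : ℂ) : ℝ :=
  p * Complex.normSq u + 2 * c * (conj u * w).re + q * Complex.normSq w

@[simp]
lemma blockForm_zero (p q c : ℝ) : blockForm p q c 0 0 = 0 := by
  simp [blockForm]

lemma blockForm_nonneg {p q c : ℝ} (hp : 0 ≤ p) (hq : 0 ≤ q) (h : c ^ 2 ≤ p * q) (u w : ℂ) :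
    0 ≤ blockForm p q c u w := by
  have real_form_nonneg : ∀ X Y : ℝ, 0 ≤ p * X ^ 2 + 2 * c * X * Y + q * Y ^ 2 := by
    intro X Y
    rcases hp.eq_or_lt with rfl | hp
    · obtain rfl : c = 0 := by nlinarith [sq_nonneg c]
      nlinarith [sq_nonneg Y]
    · nlinarith [sq_nonneg (p * X + c * Y), mul_nonneg (sub_nonneg.2 h) (sq_nonneg Y)]
  have := add_nonneg (real_form_nonneg u.re w.re) (real_form_nonneg u.im w.im)
  simp only [blockForm, Complex.normSq_apply, Complex.mul_re, Complex.conj_re, Complex.conj_im]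
  linarith

lemma sq_le_mul_of_blockForm_nonneg {p q c : ℝ} (hp : 0 < p)
    (h : ∀ u w, 0 ≤ blockForm p q c u w) : c ^ 2 ≤ p * q := by
  have := h c (-p)
  simp only [blockForm, Complex.normSq_ofReal, ← Complex.ofReal_neg, Complex.conj_ofReal,
    ← Complex.ofReal_mul, Complex.ofReal_re] at this
  nlinarith

abbrev diagOffBlockMat (ν ν' c : ℝ) : Matrix (Fin 2 ⊕ Fin 2) (Fin 2 ⊕ Fin 2) ℂ :=
  (Matrix.fromBlocks (ν' • 1) (c • 1) (c • 1) (ν • 1)).map Complex.ofReal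

lemma Jmat_isHermitian : Jmat.IsHermitian := by
  ext i j
  rcases i with i | i <;> rcases j with j | j <;> fin_cases i <;> fin_cases j <;>
    simp [Jmat, Δsymp, Complex.ext_iff] <;> norm_num

lemma isHermitian_diagOffBlockMat_add_smul_Jmat (ν ν' c s : ℝ) :
    (diagOffBlockMat ν ν' c + (s : ℂ) • Jmat).IsHermitian := by
  refine IsHermitian.add (IsHermitian.map ?_ _ fun r ↦ (Complex.conj_ofReal r).symm)
    (Jmat_isHermitian.smul (Complex.conj_ofReal s))
  exact IsHermitian.fromBlocks (by simp) (by simp) (by simp)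

lemma dotProduct_diagOffBlockMat_add_smul_Jmat_mulVec (ν ν' c s : ℝ) (x : Fin 2 ⊕ Fin 2 → ℂ) :
    star x ⬝ᵥ ((diagOffBlockMat ν ν' c + (s : ℂ) • Jmat) *ᵥ x) =
      ((blockForm (ν' + s / 2) (ν - s / 2) c (x (.inl 0) + Complex.I * x (.inl 1))
          (x (.inr 0) + Complex.I * x (.inr 1)) +
        blockForm (ν' - s / 2) (ν + s / 2) c (x (.inl 0) - Complex.I * x (.inl 1))
          (x (.inr 0) - Complex.I * x (.inr 1))) / 2 : ℝ) := by
  simp only [dotProduct, mulVec, Fintype.sum_sum_type, Fin.sum_univ_two, Matrix.fromBlocks,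
    Jmat, Δsymp, Matrix.map_apply, Matrix.add_apply, Matrix.smul_apply, blockForm]
  apply Complex.ext <;> simp [Complex.normSq_apply] <;> ring

lemma posSemidef_diagOffBlockMat_add_smul_Jmat_iff (ν ν' c s : ℝ) :
    (diagOffBlockMat ν ν' c + (s : ℂ) • Jmat).PosSemidef ↔
      ∀ u w, 0 ≤ blockForm (ν' + s / 2) (ν - s / 2) c u w ∧
        0 ≤ blockForm (ν' - s / 2) (ν + s / 2) c u w := by
  simp only [posSemidef_iff_dotProduct_mulVec, isHermitian_diagOffBlockMat_add_smul_Jmat,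
    true_and, dotProduct_diagOffBlockMat_add_smul_Jmat_mulVec, Complex.zero_le_real]
  refine ⟨fun h u w ↦ ?_, fun h x ↦ div_nonneg (add_nonneg (h _ _).1 (h _ _).2) zero_le_two⟩
  -- `x₁ ∓ i x₂ = 0` in both modes kills one of the two blocks
  have h₁ := h (Sum.elim ![u / 2, -Complex.I * u / 2] ![w / 2, -Complex.I * w / 2])
  have h₂ := h (Sum.elim ![u / 2, Complex.I * u / 2] ![w / 2, Complex.I * w / 2])
  have e₁ : ∀ z : ℂ, z / 2 + Complex.I * (-Complex.I * z / 2) = z := fun z ↦ by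
    linear_combination (-z / 2) * Complex.I_mul_I
  have e₂ : ∀ z : ℂ, z / 2 - Complex.I * (-Complex.I * z / 2) = 0 := fun z ↦ by
    linear_combination (z / 2) * Complex.I_mul_I
  have e₃ : ∀ z : ℂ, z / 2 + Complex.I * (Complex.I * z / 2) = 0 := fun z ↦ by
    linear_combination (z / 2) * Complex.I_mul_I
  have e₄ : ∀ z : ℂ, z / 2 - Complex.I * (Complex.I * z / 2) = z := fun z ↦ by
    linear_combination (-z / 2) * Complex.I_mul_I
  simp only [Sum.elim_inl, Sum.elim_inr, Matrix.cons_val_zero, Matrix.cons_val_one, e₁, e₂, e₃, e₄,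
    blockForm_zero, add_zero, zero_add] at h₁ h₂
  exact ⟨by linarith, by linarith⟩

/-- **Feasibility constraint for diagonal off-blocks** (from the proof of Theorem 4.3). -/
theorem diagonal_off_block_feasibility (ν ν' c : ℝ) (hν : 1 / 2 ≤ ν) (hνν' : ν ≤ ν') :
    (((Matrix.fromBlocks (ν' • 1) (c • 1) (c • 1) (ν • 1)).map Complex.ofReal
        + Jmat).PosSemidef ∧
     ((Matrix.fromBlocks (ν' • 1) (c • 1) (c • 1) (ν • 1)).map Complex.ofReal
        - Jmat).PosSemidef)
      ↔ c ^ 2 ≤ (ν - 1 / 2) * (ν' + 1 / 2) := by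
  have hplus := posSemidef_diagOffBlockMat_add_smul_Jmat_iff ν ν' c 1
  have hminus := posSemidef_diagOffBlockMat_add_smul_Jmat_iff ν ν' c (-1)
  simp only [Complex.ofReal_one, one_smul, Complex.ofReal_neg, neg_smul, ← sub_eq_add_neg,
    neg_div, sub_neg_eq_add] at hplus hminus
  refine (and_congr hplus hminus).trans ⟨?_, fun hc ↦ ?_⟩
  · rintro ⟨h, -⟩
    have := sq_le_mul_of_blockForm_nonneg (by linarith) fun u w ↦ (h u w).1
    linarith
  · have h₁ : ∀ u w, 0 ≤ blockForm (ν' + 1 / 2) (ν - 1 / 2) c u w :=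
      blockForm_nonneg (by linarith) (by linarith) (by linarith)
    have h₂ : ∀ u w, 0 ≤ blockForm (ν' - 1 / 2) (ν + 1 / 2) c u w :=
      blockForm_nonneg (by linarith) (by linarith) (by linarith)
    exact ⟨fun u w ↦ ⟨h₁ u w, h₂ u w⟩, fun u w ↦ ⟨h₂ u w, h₁ u w⟩⟩
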